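/- Let q ≥ 2, let λ, ν : Fin q → ℂ satisfy λ_0 = ν_0 = 1 and λ_i ≠ 0, ν_j ≠ 0 for all i, j, and let M be the q×q matrix with M_{i,j} = λ_i⁻¹ ν_j⁻¹. Let v be a q×q matrix whose 0th row and 0th column are zero, and let v₁ be the (q−1)×(q−1) matrix with (v₁)_{i,j} = v_{i+1,j+1}. Then for every s ∈ ℂ, det(M + s • v) = s^{q−1} · det(v₁). -/

import Mathlib

/-- The lower-right `(q−1)×(q−1)` block of a `q×q` matrix: `(v₁)_{i,j} = v_{i+1,j+1}`. -/
def lowerBlock {q : ℕ} (v : Matrix (Fin q) (Fin q) ℂ) :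
    Matrix (Fin (q - 1)) (Fin (q - 1)) ℂ :=
  Matrix.of fun i j =>
    v ⟨i.1 + 1, by have := i.2; omega⟩ ⟨j.1 + 1, by have := j.2; omega⟩

/-- If `M_{i,j} = λ_i⁻¹ν_j⁻¹` with `λ_0 = ν_0 = 1` and all coordinates nonzero, and `v`
has vanishing `0`th row and column with lower-right block `v₁`, then for every `s ∈ ℂ`,
`det(M + s • v) = s^{q−1} · det v₁`. -/
theorem det_hadamardInv_add_smul (q : ℕ) (hq : 2 ≤ q)
    (lam nu : Fin q → ℂ)
    (hlam0 : lam ⟨0, by omega⟩ = 1) (hnu0 : nu ⟨0, by omega⟩ = 1)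
    (hlam : ∀ i, lam i ≠ 0) (hnu : ∀ j, nu j ≠ 0)
    (v : Matrix (Fin q) (Fin q) ℂ)
    (hvrow : ∀ j, v ⟨0, by omega⟩ j = 0) (hvcol : ∀ i, v i ⟨0, by omega⟩ = 0)
    (s : ℂ) :
    (Matrix.of (fun i j => (lam i)⁻¹ * (nu j)⁻¹) + s • v).det =
      s ^ (q - 1) * (lowerBlock v).det := by
  obtain ⟨n, rfl⟩ : ∃ n, q = n + 2 := ⟨q - 2, by omega⟩
  have h0 : (⟨0, by omega⟩ : Fin (n + 2)) = 0 := rfl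
  rw [h0] at hlam0 hnu0 hvrow hvcol
  set L : Matrix (Fin (n + 2)) (Fin (n + 2)) ℂ :=
    Matrix.of (fun i j => if j = 0 then (lam i)⁻¹ else if i = j then 1 else 0) with hL
  set B : Matrix (Fin (n + 2)) (Fin (n + 2)) ℂ :=
    Matrix.of (fun i j => if i = 0 then (nu j)⁻¹ else s * v i j) with hB
  have key : (Matrix.of (fun i j => (lam i)⁻¹ * (nu j)⁻¹) + s • v) = L * B := by
    ext i j
    rw [Matrix.mul_apply, Fin.sum_univ_succ]
    rcases Fin.eq_zero_or_eq_succ i with rfl | ⟨i', rfl⟩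
    · rw [Finset.sum_eq_zero fun (k : Fin (n + 1)) _ => by
        simp [hL, Fin.succ_ne_zero k, (Fin.succ_ne_zero k).symm], add_zero]
      simp [hL, hB, hlam0, hvrow]
    · have hterm : ∀ k : Fin (n + 1),
          L i'.succ k.succ * B k.succ j = if i' = k then s * v i'.succ j else 0 := by
        intro k
        simp only [hL, hB, Matrix.of_apply, if_neg (Fin.succ_ne_zero k), Fin.succ_inj]
        rcases eq_or_ne i' k with rfl | h
        · simp
        · simp [h]
      rw [Finset.sum_congr rfl fun k _ => hterm k, Finset.sum_ite_eq]
      simp [hL, hB, Fin.succ_ne_zero]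
  rw [key, Matrix.det_mul]
  have hLdet : L.det = 1 := by
    rw [Matrix.det_of_lowerTriangular L]
    · apply Finset.prod_eq_one
      intro i _
      rcases eq_or_ne i 0 with rfl | h
      · simp [hL, hlam0]
      · simp [hL, h]
    · intro i j hij
      have hij' : i < j := hij
      have h1 : j ≠ 0 := ((Fin.zero_le i).trans_lt hij').ne'
      have h2 : i ≠ j := hij'.ne
      simp [hL, h1, h2]
  have hBdet : B.det = s ^ (n + 1) * (lowerBlock v).det := by
    rw [Matrix.det_succ_column_zero]
    rw [Fin.sum_univ_succ]
    have : ∀ i : Fin (n + 1),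
        (-1 : ℂ) ^ ((i.succ : Fin (n+2)) : ℕ) * B i.succ 0 *
          Matrix.det (B.submatrix i.succ.succAbove Fin.succ) = 0 := by
      intro i
      simp [hB, Fin.succ_ne_zero, hvcol]
    rw [Finset.sum_congr rfl fun i _ => this i, Finset.sum_const, smul_zero, add_zero]
    have hsub : B.submatrix (Fin.succAbove 0) Fin.succ = s • (lowerBlock v) := by
      ext i j
      simp only [Matrix.submatrix_apply, Fin.zero_succAbove, hB, Matrix.of_apply,
        if_neg (Fin.succ_ne_zero i), Matrix.smul_apply, smul_eq_mul]
      rfl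
    rw [hsub]
    simp only [hsub, Fin.val_zero, pow_zero, one_mul, hB, Matrix.of_apply, if_pos rfl, hnu0,
      inv_one, Matrix.det_smul]
    simp [Fintype.card_fin]
  rw [hLdet, hBdet, one_mul]
  norm_num
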